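/- Let X, Y be Banach spaces, K : (0,∞) → ℝ₊ integrable, and T(s) : X → Y bounded operators with ‖T(s)x‖ ≤ K(s)‖x‖. If Φ : [0,∞) → X is continuous, bounded, and ‖Φ(t)‖ → 0 as t → ∞, and additionally K(s) ≤ C(s^{-a} + 1)e^{-βs} for some C > 0, 0 < a < 1, β > 0, then the function v(t) = ∫₀^t T(t−s)(Φ(s)) ds satisfies ‖v(t)‖ → 0 as t → +∞. -/

import Mathlib

open MeasureTheory Set Filter

/-!
Split `∫₀ᵗ T(t-s) Φ(s) ds` at `t/2`. On `[0, t/2]` we have `‖Φ‖ ≤ B` and `t - s ≥ t/2`, so this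
part is at most `B ∫_{t/2}^t K`, which tends to `0` because `K` is integrable on `(0, ∞)`.
On `[t/2, t]` we have `‖Φ‖ ≤ ε` once `t` is large, so this part is at most `ε ∫₀^∞ K`.
-/

lemma Filter.tendsto_zero_of_forall_eventually_le_add_mul {α : Type*} {l : Filter α}
    {f g : α → ℝ} (c : ℝ) (hf : ∀ x, 0 ≤ f x) (hg : Tendsto g l (nhds 0))
    (h : ∀ ε > 0, ∀ᶠ x in l, f x ≤ g x + ε * c) : Tendsto f l (nhds 0) := by
  refine tendsto_order.2 ⟨fun b hb => Eventually.of_forall fun x => hb.trans_le (hf x),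
    fun b hb => ?_⟩
  have hε : 0 < b / (2 * (|c| + 1)) := by positivity
  filter_upwards [h _ hε, hg.eventually (gt_mem_nhds (half_pos hb))] with x hfx hgx
  have hεc : b / (2 * (|c| + 1)) * c < b / 2 := by
    calc b / (2 * (|c| + 1)) * c ≤ b / (2 * (|c| + 1)) * |c| :=
          mul_le_mul_of_nonneg_left (le_abs_self c) hε.le
      _ < b / (2 * (|c| + 1)) * (|c| + 1) := by gcongr; linarith
      _ = b / 2 := by field_simp
  linarith

namespace MeasureTheory.IntegrableOn

variable {K : ℝ → ℝ}

lemma intervalIntegrable_of_nonneg (hK : IntegrableOn K (Ioi 0)) {p q : ℝ} (hp : 0 ≤ p)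
    (hq : 0 ≤ q) : IntervalIntegrable K volume p q :=
  intervalIntegrable_iff.2 (hK.mono_set fun _ hx => by
    rcases le_total p q with h | h
    · rw [uIoc_of_le h] at hx; exact hp.trans_lt hx.1
    · rw [uIoc_of_ge h] at hx; exact hq.trans_lt hx.1)

lemma intervalIntegral_le_integral_Ioi (hK : IntegrableOn K (Ioi 0))
    (hK0 : ∀ s ∈ Ioi (0 : ℝ), 0 ≤ K s) {r : ℝ} (hr : 0 ≤ r) :
    ∫ s in (0 : ℝ)..r, K s ≤ ∫ s in Ioi 0, K s := by
  rw [intervalIntegral.integral_of_le hr]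
  exact setIntegral_mono_set hK ((ae_restrict_iff' measurableSet_Ioi).2 (.of_forall hK0))
    (Ioc_subset_Ioi_self.eventuallyLE)

lemma tendsto_intervalIntegral_nhds_zero {ι : Type*} {l : Filter ι} [l.IsCountablyGenerated]
    (hK : IntegrableOn K (Ioi 0)) {u v : ι → ℝ} (hu : Tendsto u l atTop)
    (hv : Tendsto v l atTop) : Tendsto (fun i => ∫ s in u i..v i, K s) l (nhds 0) := by
  have hlim := (intervalIntegral_tendsto_integral_Ioi 0 hK hv).sub
    (intervalIntegral_tendsto_integral_Ioi 0 hK hu)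
  rw [sub_self] at hlim
  refine hlim.congr' ?_
  filter_upwards [hu.eventually_ge_atTop 0, hv.eventually_ge_atTop 0] with i hui hvi
  exact intervalIntegral.integral_interval_sub_left
    (hK.intervalIntegrable_of_nonneg le_rfl hvi) (hK.intervalIntegrable_of_nonneg le_rfl hui)

end MeasureTheory.IntegrableOn

section Convolution

variable {X Y : Type*} [NormedAddCommGroup X] [NormedSpace ℝ X] [NormedAddCommGroup Y]
  [NormedSpace ℝ Y] {K : ℝ → ℝ} {T : ℝ → X →L[ℝ] Y} {Φ : ℝ → X}

lemma norm_intervalIntegral_apply_sub_le (hK : IntegrableOn K (Ioi 0))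
    (hK0 : ∀ s ∈ Ioi (0 : ℝ), 0 ≤ K s) (hT : ∀ s ∈ Ioi (0 : ℝ), ∀ x : X, ‖T s x‖ ≤ K s * ‖x‖)
    {a b t M : ℝ} (hab : a ≤ b) (hbt : b ≤ t) (hΦ : ∀ s ∈ Ioo a b, ‖Φ s‖ ≤ M) :
    ‖∫ s in a..b, T (t - s) (Φ s)‖ ≤ M * ∫ r in (t - b)..(t - a), K r := by
  have hKab : IntervalIntegrable (fun s => K (t - s) * M) volume a b := by
    have := (hK.intervalIntegrable_of_nonneg (sub_nonneg.2 hbt)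
      (by linarith : 0 ≤ t - a)).comp_sub_left t
    simp only [sub_sub_cancel] at this
    exact this.symm.mul_const M
  calc ‖∫ s in a..b, T (t - s) (Φ s)‖ ≤ ∫ s in a..b, K (t - s) * M := by
        refine intervalIntegral.norm_integral_le_of_norm_le hab ?_ hKab
        filter_upwards [Measure.ae_ne volume b] with s hsb hs
        have hsb : s < b := lt_of_le_of_ne hs.2 hsb
        have hts : t - s ∈ Ioi 0 := sub_pos.2 (hsb.trans_le hbt)
        calc ‖T (t - s) (Φ s)‖ ≤ K (t - s) * ‖Φ s‖ := hT _ hts _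
          _ ≤ K (t - s) * M := mul_le_mul_of_nonneg_left (hΦ s ⟨hs.1, hsb⟩) (hK0 _ hts)
    _ = M * ∫ r in (t - b)..(t - a), K r := by
        rw [intervalIntegral.integral_mul_const, intervalIntegral.integral_comp_sub_left,
          mul_comm]

lemma norm_intervalIntegral_apply_sub_le_of_split_half (hK : IntegrableOn K (Ioi 0))
    (hK0 : ∀ s ∈ Ioi (0 : ℝ), 0 ≤ K s) (hT : ∀ s ∈ Ioi (0 : ℝ), ∀ x : X, ‖T s x‖ ≤ K s * ‖x‖)
    {t B ε : ℝ} (ht : 0 ≤ t) (hint : IntervalIntegrable (fun s => T (t - s) (Φ s)) volume 0 t)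
    (hB : ∀ s ∈ Ioo 0 (t / 2), ‖Φ s‖ ≤ B) (hε : ∀ s ∈ Ioo (t / 2) t, ‖Φ s‖ ≤ ε) :
    ‖∫ s in (0 : ℝ)..t, T (t - s) (Φ s)‖
      ≤ B * (∫ r in (t / 2)..t, K r) + ε * ∫ r in (0 : ℝ)..(t / 2), K r := by
  have hsplit := intervalIntegral.integral_add_adjacent_intervals (b := t / 2)
    (hint.mono_set (uIcc_subset_uIcc_left (mem_uIcc_of_le (by positivity) (by linarith))))
    (hint.mono_set (uIcc_subset_uIcc_right (mem_uIcc_of_le (by positivity) (by linarith))))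
  rw [← hsplit]
  have h1 := norm_intervalIntegral_apply_sub_le hK hK0 hT (t := t) (by linarith) (by linarith) hB
  have h2 := norm_intervalIntegral_apply_sub_le hK hK0 hT (by linarith) le_rfl hε
  rw [sub_half, sub_zero] at h1
  rw [sub_half, sub_self] at h2
  exact (norm_add_le _ _).trans (add_le_add h1 h2)

end Convolution

theorem stmt10_general {X Y : Type*} [NormedAddCommGroup X] [NormedSpace ℝ X]
    [NormedAddCommGroup Y] [NormedSpace ℝ Y]
    (K : ℝ → ℝ) (hK0 : ∀ s ∈ Set.Ioi (0 : ℝ), 0 ≤ K s)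
    (hKint : MeasureTheory.IntegrableOn K (Set.Ioi 0))
    (T : ℝ → X →L[ℝ] Y) (hT : ∀ s ∈ Set.Ioi (0 : ℝ), ∀ x : X, ‖T s x‖ ≤ K s * ‖x‖)
    (Φ : ℝ → X)
    (hΦb : ∃ B : ℝ, ∀ t ≥ (0 : ℝ), ‖Φ t‖ ≤ B)
    (hΦ0 : Filter.Tendsto (fun t => ‖Φ t‖) Filter.atTop (nhds 0))
    (hint : ∀ t : ℝ, IntervalIntegrable (fun s => T (t - s) (Φ s))
      MeasureTheory.volume 0 t) :
    Filter.Tendsto (fun t : ℝ => ‖∫ s in (0 : ℝ)..t, T (t - s) (Φ s)‖)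
      Filter.atTop (nhds 0) := by
  obtain ⟨B, hB⟩ := hΦb
  have htail : Tendsto (fun t => B * ∫ r in (t / 2)..t, K r) atTop (nhds 0) := by
    simpa only [id, mul_zero] using ((hKint.tendsto_intervalIntegral_nhds_zero
      (tendsto_id.atTop_div_const two_pos) tendsto_id).const_mul B)
  refine tendsto_zero_of_forall_eventually_le_add_mul (∫ s in Ioi 0, K s)
    (fun _ => norm_nonneg _) htail fun ε hε => ?_
  obtain ⟨M, hM⟩ := eventually_atTop.1 (hΦ0.eventually (ge_mem_nhds hε))
  filter_upwards [eventually_ge_atTop (2 * M), eventually_ge_atTop 0] with t htM ht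
  refine (norm_intervalIntegral_apply_sub_le_of_split_half hKint hK0 hT ht (hint t)
    (fun s hs => hB s hs.1.le) (fun s hs => hM s (by linarith [hs.1]))).trans ?_
  gcongr
  exact hKint.intervalIntegral_le_integral_Ioi hK0 (by positivity)

theorem stmt10 {X Y : Type*} [NormedAddCommGroup X] [NormedSpace ℝ X] [CompleteSpace X]
    [NormedAddCommGroup Y] [NormedSpace ℝ Y] [CompleteSpace Y]
    (K : ℝ → ℝ) (hK0 : ∀ s ∈ Set.Ioi (0 : ℝ), 0 ≤ K s)
    (hKint : MeasureTheory.IntegrableOn K (Set.Ioi 0))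
    (T : ℝ → X →L[ℝ] Y) (hT : ∀ s ∈ Set.Ioi (0 : ℝ), ∀ x : X, ‖T s x‖ ≤ K s * ‖x‖)
    (C a β : ℝ) (hC : 0 < C) (ha0 : 0 < a) (ha1 : a < 1) (hβ : 0 < β)
    (hKb : ∀ s ∈ Set.Ioi (0 : ℝ), K s ≤ C * (s ^ (-a) + 1) * Real.exp (-β * s))
    (Φ : ℝ → X) (hΦc : ContinuousOn Φ (Set.Ici 0))
    (hΦb : ∃ B : ℝ, ∀ t ≥ (0 : ℝ), ‖Φ t‖ ≤ B)
    (hΦ0 : Filter.Tendsto (fun t => ‖Φ t‖) Filter.atTop (nhds 0))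
    (hint : ∀ t : ℝ, IntervalIntegrable (fun s => T (t - s) (Φ s))
      MeasureTheory.volume 0 t) :
    Filter.Tendsto (fun t : ℝ => ‖∫ s in (0 : ℝ)..t, T (t - s) (Φ s)‖)
      Filter.atTop (nhds 0) :=
  stmt10_general K hK0 hKint T hT Φ hΦb hΦ0 hint
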